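/- arXiv:1808.01905 — 7 statements merged into one kernel-verified Lean document; each statement's English description precedes it below -/
import Mathlib

section
/- Let w : [0,1] → ℝ be continuous, not affine on [0,1/2] and not affine on [1/2,1] (i.e., there do not exist a, b ∈ ℝ with w(s) = a + b·s for all s ∈ [0,1/2], and likewise for [1/2,1]). For t ∈ [0,1] define D(t) := sup_{s ∈ [0,t]} |w(s) − (s/t)·w(t)| + sup_{s ∈ [t,1]} |w(1) − w(s) − ((1−s)/(1−t))·(w(1) − w(t))|, with the conventions s/t := 0 when t = 0 and (1−s)/(1−t) := 0 when t = 1. Then there exists c > 0 such that D(t) ≥ c for all t ∈ [0,1]. -/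
lemma aux_affine_dist (w : ℝ → ℝ) (p q : ℝ) (hw : ContinuousOn w (Set.Icc p q))
    (h : ¬ ∃ a b : ℝ, ∀ s ∈ Set.Icc p q, w s = a + b * s) :
    ∃ δ > 0, ∀ a b : ℝ, ∃ s ∈ Set.Icc p q, δ ≤ |w s - (a + b * s)| := by
  set X := Set.Icc p q
  let f : C(X, ℝ) := ⟨X.restrict w, hw.restrict⟩
  let g1 : C(X, ℝ) := ContinuousMap.const X 1
  let g2 : C(X, ℝ) := ⟨fun x => (x : ℝ), continuous_subtype_val⟩
  let V : Submodule ℝ C(X, ℝ) := Submodule.span ℝ ({g1, g2} : Set C(X, ℝ))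
  haveI : FiniteDimensional ℝ V := FiniteDimensional.span_of_finite ℝ (Set.toFinite _)
  have hclosed : IsClosed (V : Set C(X, ℝ)) := Submodule.closed_of_finiteDimensional V
  have hf : f ∉ (V : Set C(X, ℝ)) := by
    intro hf
    have hf' : f ∈ V := hf
    rw [Submodule.mem_span_pair] at hf'
    obtain ⟨a, b, hab⟩ := hf'
    exact h ⟨a, b, fun s hs => by
      have := congrFun (congrArg (fun φ : C(X, ℝ) => (φ : X → ℝ)) hab) ⟨s, hs⟩
      simp [g1, g2, f, Set.restrict] at this
      linarith [this]⟩
  obtain ⟨ε, hε, hball⟩ := Metric.isOpen_iff.mp hclosed.isOpen_compl f hf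
  refine ⟨ε / 2, by linarith, fun a b => ?_⟩
  by_contra hcon
  push_neg at hcon
  have hg : a • g1 + b • g2 ∈ V :=
    Submodule.add_mem V (Submodule.smul_mem V a (Submodule.subset_span (by simp)))
      (Submodule.smul_mem V b (Submodule.subset_span (by simp)))
  have hnorm : ‖f - (a • g1 + b • g2)‖ ≤ ε / 2 := by
    apply ContinuousMap.norm_le _ (by linarith) |>.mpr
    intro x
    have := hcon x x.2
    simpa [f, g1, g2, Real.norm_eq_abs, Set.restrict] using this.le
  have : (a • g1 + b • g2) ∈ Metric.ball f ε := by
    rw [Metric.mem_ball, dist_comm, dist_eq_norm]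
    linarith
  exact hball this hg

/-- The denominator of the supremum-type self-normalized changepoint statistic, evaluated at
a continuous `w` that is not affine on `[0,1/2]` nor on `[1/2,1]`, is uniformly bounded away
from zero over `t ∈ [0,1]`.  (Lean's convention `x / 0 = 0` implements the conventions
`s/t := 0` for `t = 0` and `(1-s)/(1-t) := 0` for `t = 1`.) -/
theorem stmt_2 (w : ℝ → ℝ) (hw : ContinuousOn w (Set.Icc 0 1))
    (h1 : ¬ ∃ a b : ℝ, ∀ s ∈ Set.Icc (0 : ℝ) (1/2), w s = a + b * s)
    (h2 : ¬ ∃ a b : ℝ, ∀ s ∈ Set.Icc (1/2 : ℝ) 1, w s = a + b * s) :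
    ∃ c > 0, ∀ t ∈ Set.Icc (0 : ℝ) 1,
      c ≤ sSup ((fun s => |w s - s / t * w t|) '' Set.Icc 0 t)
          + sSup ((fun s => |w 1 - w s - (1 - s) / (1 - t) * (w 1 - w t)|) '' Set.Icc t 1) := by
  obtain ⟨δ1, hδ1, H1⟩ := aux_affine_dist w 0 (1/2)
    (hw.mono (Set.Icc_subset_Icc le_rfl (by norm_num))) h1
  obtain ⟨δ2, hδ2, H2⟩ := aux_affine_dist w (1/2) 1
    (hw.mono (Set.Icc_subset_Icc (by norm_num) le_rfl)) h2
  refine ⟨min δ1 δ2, lt_min hδ1 hδ2, fun t ht => ?_⟩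
  obtain ⟨ht0, ht1⟩ := ht
  have hsub1 : Set.Icc (0:ℝ) t ⊆ Set.Icc 0 1 := Set.Icc_subset_Icc le_rfl ht1
  have hsub2 : Set.Icc t (1:ℝ) ⊆ Set.Icc 0 1 := Set.Icc_subset_Icc ht0 le_rfl
  have hc1 : ContinuousOn (fun s => |w s - s / t * w t|) (Set.Icc 0 t) :=
    ((hw.mono hsub1).sub (((continuous_id.div_const t).mul continuous_const).continuousOn)).abs
  have hc2 : ContinuousOn (fun s => |w 1 - w s - (1 - s) / (1 - t) * (w 1 - w t)|)
      (Set.Icc t 1) :=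
    ((continuousOn_const.sub (hw.mono hsub2)).sub
      ((((continuous_const.sub continuous_id).div_const (1 - t)).mul
        continuous_const).continuousOn)).abs
  have bdd1 : BddAbove ((fun s => |w s - s / t * w t|) '' Set.Icc 0 t) :=
    (isCompact_Icc.image_of_continuousOn hc1).bddAbove
  have bdd2 : BddAbove ((fun s => |w 1 - w s - (1 - s) / (1 - t) * (w 1 - w t)|) ''
      Set.Icc t 1) :=
    (isCompact_Icc.image_of_continuousOn hc2).bddAbove
  have hS1nonneg : (0:ℝ) ≤ sSup ((fun s => |w s - s / t * w t|) '' Set.Icc 0 t) := by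
    have h0 : (0:ℝ) ∈ Set.Icc (0:ℝ) t := ⟨le_rfl, ht0⟩
    exact le_trans (abs_nonneg _) (le_csSup bdd1 (Set.mem_image_of_mem _ h0))
  have hS2nonneg : (0:ℝ) ≤ sSup ((fun s => |w 1 - w s - (1 - s) / (1 - t) * (w 1 - w t)|) ''
      Set.Icc t 1) := by
    have h0 : t ∈ Set.Icc t 1 := ⟨le_rfl, ht1⟩
    exact le_trans (abs_nonneg _) (le_csSup bdd2 (Set.mem_image_of_mem _ h0))
  rcases le_or_gt t (1/2) with hhalf | hhalf
  · -- use the second sup on [1/2, 1]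
    have h1t : (1 - t) ≠ 0 := by linarith
    obtain ⟨s, hs, hδ⟩ := H2 (w 1 - (w 1 - w t) / (1 - t)) ((w 1 - w t) / (1 - t))
    have hmem : s ∈ Set.Icc t 1 := ⟨le_trans hhalf hs.1, hs.2⟩
    have heq : |w s - (w 1 - (w 1 - w t) / (1 - t) + (w 1 - w t) / (1 - t) * s)|
        = |w 1 - w s - (1 - s) / (1 - t) * (w 1 - w t)| := by
      rw [show w s - (w 1 - (w 1 - w t) / (1 - t) + (w 1 - w t) / (1 - t) * s)
          = -(w 1 - w s - (1 - s) / (1 - t) * (w 1 - w t)) by ring]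
      exact abs_neg _
    have hle : δ2 ≤ sSup ((fun s => |w 1 - w s - (1 - s) / (1 - t) * (w 1 - w t)|) ''
        Set.Icc t 1) := by
      refine le_trans (heq ▸ hδ) (le_csSup bdd2 (Set.mem_image_of_mem _ hmem))
    calc min δ1 δ2 ≤ δ2 := min_le_right _ _
      _ ≤ _ := by linarith
  · -- use the first sup on [0, 1/2]
    have ht0' : t ≠ 0 := by positivity
    obtain ⟨s, hs, hδ⟩ := H1 0 (w t / t)
    have hmem : s ∈ Set.Icc 0 t := ⟨hs.1, le_trans hs.2 hhalf.le⟩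
    have heq : |w s - (0 + w t / t * s)| = |w s - s / t * w t| := by ring_nf
    have hle : δ1 ≤ sSup ((fun s => |w s - s / t * w t|) '' Set.Icc 0 t) :=
      le_trans (heq ▸ hδ) (le_csSup bdd1 (Set.mem_image_of_mem _ hmem))
    calc min δ1 δ2 ≤ δ1 := min_le_left _ _
      _ ≤ _ := by linarith
end

section
/- Let w : [0,1] → ℝ be continuous, not affine on [0,1/2] and not affine on [1/2,1] (i.e., there do not exist a, b ∈ ℝ with w(s) = a + b·s for all s ∈ [0,1/2], and likewise for [1/2,1]). For t ∈ [0,1] define D₂(t) := ∫₀^t (w(s) − (s/t)·w(t))² ds + ∫_t^1 (w(1) − w(s) − ((1−s)/(1−t))·(w(1) − w(t)))² ds, with the conventions s/t := 0 when t = 0 and (1−s)/(1−t) := 0 when t = 1. Then there exists c > 0 such that D₂(t) ≥ c for all t ∈ [0,1]. -/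
/-!
For `t ≥ 1/2` the first integral dominates `∫₀^{1/2} (w s - γ s)²` with `γ = w t / t`, and a
least-squares argument bounds this below, uniformly in `γ`, by its value at the optimal slope
`γ* = ∫ w s · s / ∫ s²`; that value is positive because `w` is not linear on `[0, 1/2]`.
For `t ≤ 1/2` the substitution `s ↦ 1 - s` turns the second integral into the first one for the
reflected path `s ↦ w 1 - w (1 - s)`, which is not affine on `[0, 1/2]`.
-/

open Set MeasureTheory intervalIntegral

section LeastSquares

variable {f g : ℝ → ℝ} {u v : ℝ}

lemma integral_sq_sub_mul_eq (hf : IntervalIntegrable (fun s => f s ^ 2) volume u v)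
    (hfg : IntervalIntegrable (fun s => f s * g s) volume u v)
    (hg : IntervalIntegrable (fun s => g s ^ 2) volume u v) (γ : ℝ) :
    ∫ s in u..v, (f s - γ * g s) ^ 2
      = (∫ s in u..v, f s ^ 2) - 2 * γ * (∫ s in u..v, f s * g s)
        + γ ^ 2 * ∫ s in u..v, g s ^ 2 := by
  have hexpand : ∀ s, (f s - γ * g s) ^ 2 = f s ^ 2 - 2 * γ * (f s * g s) + γ ^ 2 * g s ^ 2 :=
    fun s => by ring
  simp_rw [hexpand]
  rw [integral_add (hf.sub (hfg.const_mul _)) (hg.const_mul _),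
    integral_sub hf (hfg.const_mul _), intervalIntegral.integral_const_mul,
    intervalIntegral.integral_const_mul]

lemma integral_sq_sub_optimal_mul_le (huv : u ≤ v) (hf : ContinuousOn f (Icc u v))
    (hg : ContinuousOn g (Icc u v)) (hg₀ : 0 < ∫ s in u..v, g s ^ 2) (γ : ℝ) :
    ∫ s in u..v, (f s - (∫ r in u..v, f r * g r) / (∫ r in u..v, g r ^ 2) * g s) ^ 2
      ≤ ∫ s in u..v, (f s - γ * g s) ^ 2 := by
  have integrable {h : ℝ → ℝ} (hh : ContinuousOn h (Icc u v)) :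
      IntervalIntegrable h volume u v :=
    (hh.mono (uIcc_of_le huv).subset).intervalIntegrable
  rw [integral_sq_sub_mul_eq (integrable (hf.pow 2)) (integrable (hf.mul hg))
      (integrable (hg.pow 2)), integral_sq_sub_mul_eq (integrable (hf.pow 2))
      (integrable (hf.mul hg)) (integrable (hg.pow 2))]
  set B := ∫ r in u..v, f r * g r
  set C := ∫ r in u..v, g r ^ 2
  have complete_square : γ ^ 2 * C - 2 * γ * B - ((B / C) ^ 2 * C - 2 * (B / C) * B)
      = C * (γ - B / C) ^ 2 := by
    field_simp
    ring
  linarith [mul_nonneg hg₀.le (sq_nonneg (γ - B / C))]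

lemma integral_sq_pos_of_ne_zero (huv : u < v) (hf : ContinuousOn f (Icc u v)) {s₀ : ℝ}
    (hs₀ : s₀ ∈ Icc u v) (hne : f s₀ ≠ 0) : 0 < ∫ s in u..v, f s ^ 2 := by
  simpa using integral_lt_integral_of_continuousOn_of_le_of_exists_lt (f := fun _ => 0) huv
    continuousOn_const (hf.pow 2) (fun s _ => sq_nonneg (f s))
    ⟨s₀, hs₀, pow_two_pos_of_ne_zero hne⟩

lemma exists_pos_le_integral_sq_sub_mul (huv : u < v) (hf : ContinuousOn f (Icc u v))
    (hg : ContinuousOn g (Icc u v)) (hg₀ : 0 < ∫ s in u..v, g s ^ 2)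
    (hfg : ∀ γ, ∃ s ∈ Icc u v, f s ≠ γ * g s) :
    ∃ c > 0, ∀ γ, c ≤ ∫ s in u..v, (f s - γ * g s) ^ 2 := by
  set γ₀ := (∫ r in u..v, f r * g r) / (∫ r in u..v, g r ^ 2)
  obtain ⟨s₀, hs₀, hne⟩ := hfg γ₀
  exact ⟨_, integral_sq_pos_of_ne_zero huv (hf.sub (continuousOn_const.mul hg)) hs₀
    (sub_ne_zero.mpr hne), integral_sq_sub_optimal_mul_le huv.le hf hg hg₀⟩

end LeastSquares

lemma exists_pos_le_integral_sq_sub_div_mul {w : ℝ → ℝ} {a T : ℝ} (ha : 0 < a) (haT : a ≤ T)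
    (hw : ContinuousOn w (Icc 0 T)) (hlin : ∀ b, ∃ s ∈ Icc 0 a, w s ≠ b * s) :
    ∃ c > 0, ∀ t ∈ Icc a T, c ≤ ∫ s in (0 : ℝ)..t, (w s - s / t * w t) ^ 2 := by
  have hid₀ : 0 < ∫ s in (0 : ℝ)..a, s ^ 2 :=
    integral_sq_pos_of_ne_zero ha continuousOn_id ⟨ha.le, le_rfl⟩ ha.ne'
  obtain ⟨c, hc, hcγ⟩ := exists_pos_le_integral_sq_sub_mul ha
    (hw.mono (Icc_subset_Icc le_rfl haT)) continuousOn_id hid₀ hlin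
  refine ⟨c, hc, fun t ⟨hat, htT⟩ => ?_⟩
  have hcont : ContinuousOn (fun s => (w s - s / t * w t) ^ 2) (Icc 0 T) := by fun_prop
  calc c ≤ ∫ s in (0 : ℝ)..a, (w s - w t / t * s) ^ 2 := hcγ _
    _ = ∫ s in (0 : ℝ)..a, (w s - s / t * w t) ^ 2 := integral_congr fun s _ => by ring
    _ ≤ ∫ s in (0 : ℝ)..t, (w s - s / t * w t) ^ 2 :=
      integral_mono_interval le_rfl ha.le hat (.of_forall fun s => sq_nonneg _)
        ((hcont.mono (Icc_subset_Icc le_rfl htT)).intervalIntegrable_of_Icc (ha.le.trans hat))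

lemma integral_sq_right_term_eq_reflect (w : ℝ → ℝ) (t : ℝ) :
    ∫ s in t..(1 : ℝ), (w 1 - w s - (1 - s) / (1 - t) * (w 1 - w t)) ^ 2
      = ∫ s in (0 : ℝ)..(1 - t),
          ((w 1 - w (1 - s)) - s / (1 - t) * (w 1 - w (1 - (1 - t)))) ^ 2 := by
  simpa only [sub_sub_cancel, sub_self] using integral_comp_sub_left (a := t) (b := 1)
    (fun s => ((w 1 - w (1 - s)) - s / (1 - t) * (w 1 - w (1 - (1 - t)))) ^ 2) 1

/-- The denominator of the integral-type self-normalized changepoint statistic, evaluated at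
a continuous `w` that is not affine on `[0,1/2]` nor on `[1/2,1]`, is uniformly bounded away
from zero over `t ∈ [0,1]`.  (Lean's convention `x / 0 = 0` implements the conventions
`s/t := 0` for `t = 0` and `(1-s)/(1-t) := 0` for `t = 1`.) -/
theorem stmt_3 (w : ℝ → ℝ) (hw : ContinuousOn w (Set.Icc 0 1))
    (h1 : ¬ ∃ a b : ℝ, ∀ s ∈ Set.Icc (0 : ℝ) (1/2), w s = a + b * s)
    (h2 : ¬ ∃ a b : ℝ, ∀ s ∈ Set.Icc (1/2 : ℝ) 1, w s = a + b * s) :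
    ∃ c > 0, ∀ t ∈ Set.Icc (0 : ℝ) 1,
      c ≤ (∫ s in (0 : ℝ)..t, (w s - s / t * w t) ^ 2)
          + ∫ s in t..(1 : ℝ), (w 1 - w s - (1 - s) / (1 - t) * (w 1 - w t)) ^ 2 := by
  push Not at h1 h2
  obtain ⟨cL, hcL, hL⟩ := exists_pos_le_integral_sq_sub_div_mul (a := 1 / 2) (by norm_num)
    (by norm_num) hw fun b => by simpa using h1 0 b
  have hw' : ContinuousOn (fun s => w 1 - w (1 - s)) (Icc 0 1) :=
    continuousOn_const.sub
      (hw.comp (by fun_prop) fun s ⟨hs0, hs1⟩ => ⟨by linarith, by linarith⟩)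
  obtain ⟨cR, hcR, hR⟩ := exists_pos_le_integral_sq_sub_div_mul (a := 1 / 2) (by norm_num)
    (by norm_num) hw' fun b => by
      obtain ⟨s, ⟨hs0, hs1⟩, hs⟩ := h2 (w 1 - b) b
      refine ⟨1 - s, ⟨by linarith, by linarith⟩, fun h => hs ?_⟩
      simp only [sub_sub_cancel] at h
      linarith
  refine ⟨min cL cR, lt_min hcL hcR, fun t ⟨ht0, ht1⟩ => ?_⟩
  have hleft : 0 ≤ ∫ s in (0 : ℝ)..t, (w s - s / t * w t) ^ 2 :=
    integral_nonneg ht0 fun s _ => sq_nonneg _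
  have hright : 0 ≤ ∫ s in t..(1 : ℝ), (w 1 - w s - (1 - s) / (1 - t) * (w 1 - w t)) ^ 2 :=
    integral_nonneg ht1 fun s _ => sq_nonneg _
  rcases le_total (1 / 2) t with ht | ht
  · linarith [min_le_left cL cR, hL t ⟨ht, ht1⟩]
  · have := hR (1 - t) ⟨by linarith, by linarith⟩
    rw [← integral_sq_right_term_eq_reflect] at this
    linarith [min_le_right cL cR]
end

section
/- Let w : [0,1] → ℝ be continuous, not affine on [0,1/2] and not affine on [1/2,1] (i.e., there do not exist a, b ∈ ℝ with w(s) = a + b·s for all s ∈ [0,1/2], and likewise for [1/2,1]). For any bounded function v : [0,1] → ℝ define Φ(v)(t) := (v(t) − t·v(1)) / (sup_{s ∈ [0,t]} |v(s) − (s/t)·v(t)| + sup_{s ∈ [t,1]} |v(1) − v(s) − ((1−s)/(1−t))·(v(1) − v(t))|), with the conventions s/t := 0 when t = 0, (1−s)/(1−t) := 0 when t = 1, and division by zero yielding 0. Then Φ is continuous at w with respect to the supremum metric: for every ε > 0 there exists δ > 0 such that every bounded v : [0,1] → ℝ with sup_{t ∈ [0,1]} |v(t) − w(t)| < δ satisfies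 sup_{t ∈ [0,1]} |Φ(v)(t) − Φ(w)(t)| < ε. -/
/-- The supremum-type self-normalized ratio mapping.  Lean's convention `x / 0 = 0`
implements the conventions `s/t := 0` for `t = 0`, `(1-s)/(1-t) := 0` for `t = 1`, and
division by a zero denominator yielding `0`. -/
noncomputable def snRatioSup (v : ℝ → ℝ) (t : ℝ) : ℝ :=
  (v t - t * v 1) /
    (sSup ((fun s => |v s - s / t * v t|) '' Set.Icc 0 t)
      + sSup ((fun s => |v 1 - v s - (1 - s) / (1 - t) * (v 1 - v t)|) '' Set.Icc t 1))

/-! The numerator `v t - t * v 1` and the two suprema of bridge deviations in the denominator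
each move by at most `2 * sup |v - w|` when `w` is replaced by `v`, so continuity at `w` comes
down to the denominator of `w` being bounded away from `0` uniformly in `t`. For every `t`, one
of `[0, t]` and `[t, 1]` contains a half-interval, on which the bridge of `w` is `w` minus an
affine function; a function that is not affine there keeps a positive sup-distance from all
affine functions. -/

open Set

lemma abs_sSup_image_sub_sSup_image_le {α : Type*} {S : Set α} (hS : S.Nonempty)
    {f g : α → ℝ} {d : ℝ} (hg : BddAbove (g '' S)) (hfg : ∀ x ∈ S, |f x - g x| ≤ d) :
    |sSup (f '' S) - sSup (g '' S)| ≤ d := by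
  obtain ⟨B, hB⟩ := hg
  have hf : BddAbove (f '' S) := ⟨B + d, by
    rintro _ ⟨x, hx, rfl⟩
    linarith [(abs_le.1 (hfg x hx)).2, hB (mem_image_of_mem g hx)]⟩
  rw [abs_sub_le_iff]
  constructor
  · refine sub_le_iff_le_add'.2 (csSup_le (hS.image f) ?_)
    rintro _ ⟨x, hx, rfl⟩
    linarith [(abs_le.1 (hfg x hx)).2, le_csSup ⟨B, hB⟩ (mem_image_of_mem g hx)]
  · refine sub_le_iff_le_add'.2 (csSup_le (hS.image g) ?_)
    rintro _ ⟨x, hx, rfl⟩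
    linarith [(abs_le.1 (hfg x hx)).1, le_csSup hf (mem_image_of_mem f hx)]

lemma abs_div_sub_div_le {n₁ n₂ d₁ d₂ c : ℝ} (hc : 0 < c) (hd₁ : c ≤ d₁) (hd₂ : c ≤ d₂) :
    |n₁ / d₁ - n₂ / d₂| ≤ (|n₁ - n₂| + |n₂| * |d₁ - d₂| / c) / c := by
  have hd₁' : 0 < d₁ := hc.trans_le hd₁
  have hd₂' : 0 < d₂ := hc.trans_le hd₂
  have split : n₁ / d₁ - n₂ / d₂ = (n₁ - n₂) / d₁ - n₂ * (d₁ - d₂) / (d₁ * d₂) := by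
    field_simp
    ring
  calc |n₁ / d₁ - n₂ / d₂|
      ≤ |n₁ - n₂| / d₁ + |n₂| * |d₁ - d₂| / (d₁ * d₂) := by
        rw [split]
        refine (abs_sub _ _).trans_eq ?_
        rw [abs_div, abs_div, abs_mul, abs_of_pos hd₁', abs_of_pos (mul_pos hd₁' hd₂')]
    _ ≤ |n₁ - n₂| / c + |n₂| * |d₁ - d₂| / (c * c) := by gcongr
    _ = (|n₁ - n₂| + |n₂| * |d₁ - d₂| / c) / c := by field_simp

def AffineOn (w : ℝ → ℝ) (S : Set ℝ) : Prop := ∃ a b : ℝ, ∀ s ∈ S, w s = a + b * s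

/-- A function that is not affine on `[p, q]` differs from its chord at some `s₀`; the second
difference `w s₀ - chord s₀` is unchanged by subtracting an affine function and is at most
twice the sup-distance, so it bounds every affine approximation from below. -/
lemma exists_pos_forall_le_abs_sub_affine {w : ℝ → ℝ} {p q : ℝ} (hpq : p < q)
    (hw : ¬ AffineOn w (Icc p q)) :
    ∃ c > 0, ∀ a b : ℝ, ∃ s ∈ Icc p q, c ≤ |w s - (a + b * s)| := by
  have hqp : 0 < q - p := sub_pos.2 hpq
  set β := (w q - w p) / (q - p)
  obtain ⟨s₀, hs₀, hne⟩ : ∃ s₀ ∈ Icc p q, w s₀ ≠ (w p - β * p) + β * s₀ := by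
    by_contra! h
    exact hw ⟨_, _, h⟩
  set Δ := w s₀ - ((w p - β * p) + β * s₀)
  refine ⟨|Δ| / 2, half_pos (abs_pos.2 (sub_ne_zero.2 hne)), fun a b => ?_⟩
  by_contra! hlt
  set u : ℝ → ℝ := fun s => w s - (a + b * s)
  set r := (s₀ - p) / (q - p)
  have hr0 : 0 ≤ r := div_nonneg (sub_nonneg.2 hs₀.1) hqp.le
  have hr1 : r ≤ 1 := div_le_one_of_le₀ (by linarith [hs₀.2]) hqp.le
  have hΔ : Δ = u s₀ - ((1 - r) * u p + r * u q) := by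
    simp only [Δ, u, r, β]
    field_simp
    ring
  have hp := hlt p (left_mem_Icc.2 hpq.le)
  have hs := hlt s₀ hs₀
  have hq := hlt q (right_mem_Icc.2 hpq.le)
  have : |Δ| < |Δ| := calc
    |Δ| ≤ |u s₀| + (|(1 - r) * u p| + |r * u q|) := by
      rw [hΔ]
      exact (abs_sub _ _).trans (by gcongr; exact abs_add_le _ _)
    _ = |u s₀| + ((1 - r) * |u p| + r * |u q|) := by
      rw [abs_mul, abs_mul, abs_of_nonneg hr0, abs_of_nonneg (sub_nonneg.2 hr1)]
    _ < |Δ| / 2 + ((1 - r) * (|Δ| / 2) + r * (|Δ| / 2)) := by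
      have : (1 - r) * |u p| + r * |u q| ≤ (1 - r) * (|Δ| / 2) + r * (|Δ| / 2) := by
        gcongr
      linarith
    _ = |Δ| := by ring
  exact lt_irrefl _ this

noncomputable section Bridge

variable (v : ℝ → ℝ) (t s : ℝ)

def leftBridge : ℝ := v s - s / t * v t

def rightBridge : ℝ := v 1 - v s - (1 - s) / (1 - t) * (v 1 - v t)

def leftBridgeSup : ℝ := sSup ((fun s => |leftBridge v t s|) '' Icc 0 t)

def rightBridgeSup : ℝ := sSup ((fun s => |rightBridge v t s|) '' Icc t 1)

lemma snRatioSup_eq_div :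
    snRatioSup v t = (v t - t * v 1) / (leftBridgeSup v t + rightBridgeSup v t) := rfl

variable (w : ℝ → ℝ)

lemma leftBridge_sub_leftBridge : leftBridge v t s - leftBridge w t s = leftBridge (v - w) t s := by
  simp only [leftBridge, Pi.sub_apply]
  ring

lemma rightBridge_sub_rightBridge :
    rightBridge v t s - rightBridge w t s = rightBridge (v - w) t s := by
  simp only [rightBridge, Pi.sub_apply]
  ring

variable {v w t s}

lemma abs_leftBridge_le {δ : ℝ} (hv : ∀ x ∈ Icc (0 : ℝ) 1, |v x| ≤ δ) (ht : t ≤ 1)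
    (hs : s ∈ Icc 0 t) : |leftBridge v t s| ≤ 2 * δ := by
  have hr0 : 0 ≤ s / t := div_nonneg hs.1 (hs.1.trans hs.2)
  have hr1 : s / t ≤ 1 := div_le_one_of_le₀ hs.2 (hs.1.trans hs.2)
  have hvs := abs_le.1 (hv s ⟨hs.1, hs.2.trans ht⟩)
  have hvt := abs_le.1 (hv t ⟨hs.1.trans hs.2, ht⟩)
  rw [leftBridge, abs_le]
  constructor <;> nlinarith

lemma abs_rightBridge_le {δ : ℝ} (hv : ∀ x ∈ Icc (0 : ℝ) 1, |v x| ≤ δ) (ht : 0 ≤ t)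
    (hs : s ∈ Icc t 1) : |rightBridge v t s| ≤ 2 * δ := by
  have hr0 : 0 ≤ (1 - s) / (1 - t) := div_nonneg (by linarith [hs.2]) (by linarith [hs.1, hs.2])
  have hr1 : (1 - s) / (1 - t) ≤ 1 :=
    div_le_one_of_le₀ (by linarith [hs.1]) (by linarith [hs.1, hs.2])
  have hv1 := abs_le.1 (hv 1 ⟨zero_le_one, le_rfl⟩)
  have hvs := abs_le.1 (hv s ⟨ht.trans hs.1, hs.2⟩)
  have hvt := abs_le.1 (hv t ⟨ht, hs.1.trans hs.2⟩)
  rw [rightBridge, abs_le]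
  constructor <;> nlinarith

lemma le_leftBridgeSup {K : ℝ} (hw : ∀ x ∈ Icc (0 : ℝ) 1, |w x| ≤ K) (ht : t ≤ 1)
    (hs : s ∈ Icc 0 t) : |leftBridge w t s| ≤ leftBridgeSup w t :=
  le_csSup ⟨2 * K, by rintro _ ⟨x, hx, rfl⟩; exact abs_leftBridge_le hw ht hx⟩
    (mem_image_of_mem _ hs)

lemma le_rightBridgeSup {K : ℝ} (hw : ∀ x ∈ Icc (0 : ℝ) 1, |w x| ≤ K) (ht : 0 ≤ t)
    (hs : s ∈ Icc t 1) : |rightBridge w t s| ≤ rightBridgeSup w t :=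
  le_csSup ⟨2 * K, by rintro _ ⟨x, hx, rfl⟩; exact abs_rightBridge_le hw ht hx⟩
    (mem_image_of_mem _ hs)

lemma leftBridgeSup_nonneg : 0 ≤ leftBridgeSup w t :=
  Real.sSup_nonneg (by rintro _ ⟨x, -, rfl⟩; exact abs_nonneg _)

lemma rightBridgeSup_nonneg : 0 ≤ rightBridgeSup w t :=
  Real.sSup_nonneg (by rintro _ ⟨x, -, rfl⟩; exact abs_nonneg _)

lemma abs_leftBridgeSup_sub_le {K δ : ℝ} (hw : ∀ x ∈ Icc (0 : ℝ) 1, |w x| ≤ K)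
    (hvw : ∀ x ∈ Icc (0 : ℝ) 1, |(v - w) x| ≤ δ) (ht : t ∈ Icc (0 : ℝ) 1) :
    |leftBridgeSup v t - leftBridgeSup w t| ≤ 2 * δ :=
  abs_sSup_image_sub_sSup_image_le (nonempty_Icc.2 ht.1)
    ⟨2 * K, by rintro _ ⟨x, hx, rfl⟩; exact abs_leftBridge_le hw ht.2 hx⟩ fun s hs =>
    (abs_abs_sub_abs_le_abs_sub _ _).trans <| by
      rw [leftBridge_sub_leftBridge]; exact abs_leftBridge_le hvw ht.2 hs

lemma abs_rightBridgeSup_sub_le {K δ : ℝ} (hw : ∀ x ∈ Icc (0 : ℝ) 1, |w x| ≤ K)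
    (hvw : ∀ x ∈ Icc (0 : ℝ) 1, |(v - w) x| ≤ δ) (ht : t ∈ Icc (0 : ℝ) 1) :
    |rightBridgeSup v t - rightBridgeSup w t| ≤ 2 * δ :=
  abs_sSup_image_sub_sSup_image_le (nonempty_Icc.2 ht.2)
    ⟨2 * K, by rintro _ ⟨x, hx, rfl⟩; exact abs_rightBridge_le hw ht.1 hx⟩ fun s hs =>
    (abs_abs_sub_abs_le_abs_sub _ _).trans <| by
      rw [rightBridge_sub_rightBridge]; exact abs_rightBridge_le hvw ht.1 hs

end Bridge

lemma exists_pos_le_leftBridgeSup_add_rightBridgeSup {w : ℝ → ℝ} {K : ℝ}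
    (hw : ∀ x ∈ Icc (0 : ℝ) 1, |w x| ≤ K) (h₁ : ¬ AffineOn w (Icc 0 (1 / 2)))
    (h₂ : ¬ AffineOn w (Icc (1 / 2) 1)) :
    ∃ c > 0, ∀ t ∈ Icc (0 : ℝ) 1, c ≤ leftBridgeSup w t + rightBridgeSup w t := by
  obtain ⟨c₁, hc₁, H₁⟩ := exists_pos_forall_le_abs_sub_affine (by norm_num) h₁
  obtain ⟨c₂, hc₂, H₂⟩ := exists_pos_forall_le_abs_sub_affine (by norm_num) h₂
  refine ⟨min c₁ c₂, lt_min hc₁ hc₂, fun t ht => ?_⟩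
  rcases le_or_gt t (1 / 2) with hth | hth
  · set b := (w 1 - w t) / (1 - t)
    obtain ⟨s, hs, hc⟩ := H₂ (w 1 - b) b
    have hbridge : |w s - (w 1 - b + b * s)| = |rightBridge w t s| := by
      rw [← abs_neg, rightBridge]
      congr 1
      simp only [b]
      ring
    have := le_rightBridgeSup hw ht.1 ⟨hth.trans hs.1, hs.2⟩
    linarith [min_le_right c₁ c₂, leftBridgeSup_nonneg (w := w) (t := t)]
  · obtain ⟨s, hs, hc⟩ := H₁ 0 (w t / t)
    have hbridge : |w s - (0 + w t / t * s)| = |leftBridge w t s| := by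
      rw [leftBridge]
      congr 1
      ring
    have := le_leftBridgeSup hw ht.2 ⟨hs.1, hs.2.trans hth.le⟩
    linarith [min_le_left c₁ c₂, rightBridgeSup_nonneg (w := w) (t := t)]

lemma abs_snRatioSup_sub_le {v w : ℝ → ℝ} {K c δ t : ℝ} (hw : ∀ x ∈ Icc (0 : ℝ) 1, |w x| ≤ K)
    (hc : 0 < c) (hcw : c ≤ leftBridgeSup w t + rightBridgeSup w t)
    (hvw : ∀ x ∈ Icc (0 : ℝ) 1, |(v - w) x| ≤ δ) (hδ : 8 * δ ≤ c) (ht : t ∈ Icc (0 : ℝ) 1) :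
    |snRatioSup v t - snRatioSup w t| ≤ 4 * (c + 8 * K) / c ^ 2 * δ := by
  have hK : 0 ≤ K := (abs_nonneg _).trans (hw 0 ⟨le_rfl, zero_le_one⟩)
  have hden : |(leftBridgeSup v t + rightBridgeSup v t) - (leftBridgeSup w t + rightBridgeSup w t)|
      ≤ 4 * δ := by
    have hl := abs_le.1 (abs_leftBridgeSup_sub_le hw hvw ht)
    have hr := abs_le.1 (abs_rightBridgeSup_sub_le hw hvw ht)
    rw [abs_le]
    constructor <;> linarith
  have hcv : c / 2 ≤ leftBridgeSup v t + rightBridgeSup v t := by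
    linarith [(abs_le.1 hden).1]
  -- the numerators are the left bridges at time `1`, evaluated at `t`
  have hnum : |(v t - t * v 1) - (w t - t * w 1)| ≤ 2 * δ := by
    have := abs_leftBridge_le hvw le_rfl ht
    rwa [← leftBridge_sub_leftBridge, leftBridge, leftBridge, div_one] at this
  have hnumw : |w t - t * w 1| ≤ 2 * K := by
    have := abs_leftBridge_le hw le_rfl ht
    rwa [leftBridge, div_one] at this
  rw [snRatioSup_eq_div, snRatioSup_eq_div]
  calc _ ≤ _ := abs_div_sub_div_le (by positivity) hcv (by linarith)
    _ ≤ (2 * δ + 2 * K * (4 * δ) / (c / 2)) / (c / 2) := by gcongr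
    _ = 4 * (c + 8 * K) / c ^ 2 * δ := by field_simp; ring

/-- The supremum-type self-normalized ratio mapping is continuous (w.r.t. the supremum metric
on `[0,1]`, over bounded functions) at every continuous `w` that is not affine on `[0,1/2]`
nor on `[1/2,1]`. -/
theorem stmt_4 (w : ℝ → ℝ) (hw : ContinuousOn w (Set.Icc 0 1))
    (h1 : ¬ ∃ a b : ℝ, ∀ s ∈ Set.Icc (0 : ℝ) (1/2), w s = a + b * s)
    (h2 : ¬ ∃ a b : ℝ, ∀ s ∈ Set.Icc (1/2 : ℝ) 1, w s = a + b * s) :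
    ∀ ε > 0, ∃ δ > 0, ∀ v : ℝ → ℝ,
      (∃ M : ℝ, ∀ t ∈ Set.Icc (0 : ℝ) 1, |v t| ≤ M) →
      sSup ((fun t => |v t - w t|) '' Set.Icc (0 : ℝ) 1) < δ →
      sSup ((fun t => |snRatioSup v t - snRatioSup w t|) '' Set.Icc (0 : ℝ) 1) < ε := by
  obtain ⟨K, hK⟩ : ∃ K, ∀ x ∈ Icc (0 : ℝ) 1, |w x| ≤ K :=
    isCompact_Icc.exists_bound_of_continuousOn hw
  have hK0 : 0 ≤ K := (abs_nonneg _).trans (hK 0 ⟨le_rfl, zero_le_one⟩)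
  obtain ⟨c, hc, hcw⟩ := exists_pos_le_leftBridgeSup_add_rightBridgeSup hK h1 h2
  intro ε hε
  set L := 4 * (c + 8 * K) / c ^ 2
  have hL : 0 < L := by positivity
  set δ := min (c / 8) (ε / (2 * L))
  have hLδ : L * δ ≤ ε / 2 := calc
    L * δ ≤ L * (ε / (2 * L)) := by gcongr; exact min_le_right _ _
    _ = ε / 2 := by field_simp
  refine ⟨δ, by positivity, fun v ⟨M, hM⟩ hsup => ?_⟩
  have hvw : ∀ x ∈ Icc (0 : ℝ) 1, |(v - w) x| ≤ δ := fun x hx =>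
    (le_csSup ⟨M + K, by
      rintro _ ⟨y, hy, rfl⟩
      exact (abs_sub _ _).trans (add_le_add (hM y hy) (hK y hy))⟩
      (mem_image_of_mem _ hx)).trans hsup.le
  have hpt : ∀ t ∈ Icc (0 : ℝ) 1, |snRatioSup v t - snRatioSup w t| ≤ ε / 2 := fun t ht =>
    (abs_snRatioSup_sub_le hK hc (hcw t ht) hvw (by linarith [min_le_left (c / 8) (ε / (2 * L))])
      ht).trans hLδ
  exact (Real.sSup_le (by rintro _ ⟨t, ht, rfl⟩; exact hpt t ht) (by positivity)).trans_lt
    (half_lt_self hε)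
end

section
/- Let w : [0,1] → ℝ be continuous, not affine on [0,1/2] and not affine on [1/2,1] (i.e., there do not exist a, b ∈ ℝ with w(s) = a + b·s for all s ∈ [0,1/2], and likewise for [1/2,1]). For any bounded measurable function v : [0,1] → ℝ define Ψ(v)(t) := (v(t) − t·v(1)) / ( ∫₀^t (v(s) − (s/t)·v(t))² ds + ∫_t^1 (v(1) − v(s) − ((1−s)/(1−t))·(v(1) − v(t)))² ds )^{1/2}, with the conventions s/t := 0 when t = 0, (1−s)/(1−t) := 0 when t = 1, and division by zero yielding 0. Then Ψ is continuous at w with respect to the supremum metric: for every ε > 0 there exists δ > 0 such that every bounded measurable v : [0,1] → ℝ with sup_{t ∈ [0,1]} |v(t) − w(t)| < δ satisfies sup_{t ∈ [0,1]} |Ψ(v)(t) − Ψ(w)(t)| < ε. -/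
/-- The integral-type self-normalized ratio mapping.  Lean's convention `x / 0 = 0`
implements the conventions `s/t := 0` for `t = 0`, `(1-s)/(1-t) := 0` for `t = 1`, and
division by a zero denominator yielding `0`. -/
noncomputable def snRatioInt (v : ℝ → ℝ) (t : ℝ) : ℝ :=
  (v t - t * v 1) /
    Real.sqrt ((∫ s in (0 : ℝ)..t, (v s - s / t * v t) ^ 2)
      + ∫ s in t..(1 : ℝ), (v 1 - v s - (1 - s) / (1 - t) * (v 1 - v t)) ^ 2)

/-! Write the denominator of `snRatioInt v t` as `chordDev v t + chordDev ṽ (1 - t)`, where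
`chordDev f t = ∫₀ᵗ (f s - (s / t) f t)² ds` and `ṽ s = v 1 - v (1 - s)` is the time reversal
(substitute `s ↦ 1 - s` in the second integral). On functions bounded by `K`, each term is
Lipschitz in `v` for the sup norm, uniformly in `t`. For the non-affine `w` the denominator is
bounded below by some `c > 0`: for `t ≥ 1/2` it dominates `∫₀^{1/2} (w s - s u)² ds` with
`u = w t / t`, a positive continuous function of `u` evaluated on a compact set of slopes; for
`t ≤ 1/2` the same applies to the time reversal. Since `a / √x` is Lipschitz on `x ≥ c / 2`, the
ratios are uniformly close once `v` is uniformly close to `w`. -/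

open MeasureTheory Set Filter Topology

noncomputable def chordDev (f : ℝ → ℝ) (t : ℝ) : ℝ :=
  ∫ s in (0 : ℝ)..t, (f s - s / t * f t) ^ 2

def timeReversal (f : ℝ → ℝ) (s : ℝ) : ℝ := f 1 - f (1 - s)

noncomputable def selfNormalizer (f : ℝ → ℝ) (t : ℝ) : ℝ :=
  chordDev f t + chordDev (timeReversal f) (1 - t)

lemma snRatioInt_eq (v : ℝ → ℝ) (t : ℝ) :
    snRatioInt v t = (v t - t * v 1) / √(selfNormalizer v t) := by
  have h := intervalIntegral.integral_comp_sub_left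
    (fun x => (timeReversal v x - x / (1 - t) * timeReversal v (1 - t)) ^ 2) (a := t) (b := 1) 1
  simp only [timeReversal, sub_sub_cancel, sub_self] at h
  rw [snRatioInt, selfNormalizer, chordDev, chordDev, h]
  simp only [timeReversal, sub_sub_cancel]

lemma chordDev_nonneg (f : ℝ → ℝ) {t : ℝ} (ht : 0 ≤ t) : 0 ≤ chordDev f t :=
  intervalIntegral.integral_nonneg ht fun _ _ => sq_nonneg _

section Bounds

variable {f v w : ℝ → ℝ} {K δ t : ℝ}

lemma abs_sub_div_mul_le (hf : ∀ x ∈ Icc (0 : ℝ) 1, |f x| ≤ K) (ht : t ≤ 1) {s : ℝ}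
    (hs : s ∈ Icc 0 t) : |f s - s / t * f t| ≤ 2 * K := by
  have ht0 : 0 ≤ t := hs.1.trans hs.2
  have hst0 : 0 ≤ s / t := div_nonneg hs.1 ht0
  have hst1 : s / t ≤ 1 := div_le_one_of_le₀ hs.2 ht0
  have hfs := hf s ⟨hs.1, hs.2.trans ht⟩
  have hft := hf t ⟨ht0, ht⟩
  calc |f s - s / t * f t| ≤ |f s| + s / t * |f t| := by
        simpa [abs_mul, abs_of_nonneg hst0] using abs_sub (f s) (s / t * f t)
    _ ≤ K + 1 * K := by gcongr
    _ = 2 * K := by ring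

lemma abs_timeReversal_le (hf : ∀ x ∈ Icc (0 : ℝ) 1, |f x| ≤ K) :
    ∀ s ∈ Icc (0 : ℝ) 1, |timeReversal f s| ≤ 2 * K := by
  intro s hs
  have h1 := hf 1 ⟨zero_le_one, le_rfl⟩
  have h2 := hf (1 - s) ⟨by linarith [hs.2], by linarith [hs.1]⟩
  calc |timeReversal f s| ≤ |f 1| + |f (1 - s)| := abs_sub _ _
    _ ≤ 2 * K := by linarith

lemma timeReversal_sub (v w : ℝ → ℝ) (s : ℝ) :
    timeReversal v s - timeReversal w s = timeReversal (fun x => v x - w x) s := by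
  simp only [timeReversal]; ring

lemma ContinuousOn.timeReversal (hf : ContinuousOn f (Icc 0 1)) :
    ContinuousOn (timeReversal f) (Icc 0 1) :=
  continuousOn_const.sub <| hf.comp (continuousOn_const.sub continuousOn_id)
    fun s hs => ⟨by linarith [hs.2], by linarith [hs.1]⟩

lemma MeasureTheory.AEStronglyMeasurable.timeReversal
    (hf : AEStronglyMeasurable f (volume.restrict (Icc (0 : ℝ) 1))) :
    AEStronglyMeasurable (timeReversal f) (volume.restrict (Icc (0 : ℝ) 1)) := by
  have hpres : MeasurePreserving (fun x : ℝ => 1 - x)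
      (volume.restrict (Icc 0 1)) (volume.restrict (Icc 0 1)) := by
    simpa [preimage_const_sub_Icc] using
      (volume.measurePreserving_sub_left (1 : ℝ)).restrict_preimage
        (measurableSet_Icc (a := (0 : ℝ)) (b := 1))
  exact aestronglyMeasurable_const.sub (hf.comp_measurePreserving hpres)

lemma intervalIntegrable_sq_sub_div_mul (hf : AEStronglyMeasurable f (volume.restrict (Icc (0 : ℝ) 1)))
    (hK : ∀ x ∈ Icc (0 : ℝ) 1, |f x| ≤ K) (ht : t ∈ Icc (0 : ℝ) 1) :
    IntervalIntegrable (fun s => (f s - s / t * f t) ^ 2) volume 0 t := by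
  rw [intervalIntegrable_iff_integrableOn_Ioc_of_le ht.1]
  have hmeas : AEStronglyMeasurable (fun s => (f s - s / t * f t) ^ 2) (volume.restrict (Ioc 0 t)) :=
    ((hf.mono_measure (Measure.restrict_mono (Ioc_subset_Icc_self.trans
      (Icc_subset_Icc le_rfl ht.2)) le_rfl)).sub
      ((continuous_id.div_const t).mul continuous_const).aestronglyMeasurable).pow 2
  refine Integrable.of_bound hmeas ((2 * K) ^ 2) ?_
  filter_upwards [ae_restrict_mem measurableSet_Ioc] with s hs
  rw [Real.norm_eq_abs, abs_pow]
  exact pow_le_pow_left₀ (abs_nonneg _) (abs_sub_div_mul_le hK ht.2 (Ioc_subset_Icc_self hs)) 2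

lemma abs_chordDev_sub_le (hv : AEStronglyMeasurable v (volume.restrict (Icc (0 : ℝ) 1)))
    (hw : AEStronglyMeasurable w (volume.restrict (Icc (0 : ℝ) 1)))
    (hvK : ∀ x ∈ Icc (0 : ℝ) 1, |v x| ≤ K) (hwK : ∀ x ∈ Icc (0 : ℝ) 1, |w x| ≤ K)
    (hvw : ∀ x ∈ Icc (0 : ℝ) 1, |v x - w x| ≤ δ) (ht : t ∈ Icc (0 : ℝ) 1) :
    |chordDev v t - chordDev w t| ≤ 8 * K * δ := by
  have hδ : 0 ≤ δ := (abs_nonneg _).trans (hvw 0 ⟨le_rfl, zero_le_one⟩)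
  have hK : 0 ≤ K := (abs_nonneg _).trans (hvK 0 ⟨le_rfl, zero_le_one⟩)
  have hpt : ∀ s ∈ uIoc 0 t,
      ‖(v s - s / t * v t) ^ 2 - (w s - s / t * w t) ^ 2‖ ≤ 8 * K * δ := by
    intro s hs
    rw [uIoc_of_le ht.1] at hs
    have hs' := Ioc_subset_Icc_self hs
    have hdiff : |(v s - s / t * v t) - (w s - s / t * w t)| ≤ 2 * δ := by
      convert abs_sub_div_mul_le (f := fun x => v x - w x) hvw ht.2 hs' using 2; ring
    have hsum : |(v s - s / t * v t) + (w s - s / t * w t)| ≤ 4 * K := by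
      linarith [abs_add_le (v s - s / t * v t) (w s - s / t * w t),
        abs_sub_div_mul_le hvK ht.2 hs', abs_sub_div_mul_le hwK ht.2 hs']
    rw [Real.norm_eq_abs, sq_sub_sq, abs_mul]
    nlinarith [abs_nonneg (v s - s / t * v t - (w s - s / t * w t))]
  calc |chordDev v t - chordDev w t|
      = ‖∫ s in (0 : ℝ)..t, ((v s - s / t * v t) ^ 2 - (w s - s / t * w t) ^ 2)‖ := by
        rw [chordDev, chordDev, intervalIntegral.integral_sub (intervalIntegrable_sq_sub_div_mul hv hvK ht)
          (intervalIntegrable_sq_sub_div_mul hw hwK ht), Real.norm_eq_abs]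
    _ ≤ 8 * K * δ * |t - 0| := intervalIntegral.norm_integral_le_of_norm_le_const hpt
    _ ≤ 8 * K * δ := by
        rw [sub_zero, abs_of_nonneg ht.1]; exact mul_le_of_le_one_right (by positivity) ht.2

lemma abs_selfNormalizer_sub_le (hv : AEStronglyMeasurable v (volume.restrict (Icc (0 : ℝ) 1)))
    (hw : AEStronglyMeasurable w (volume.restrict (Icc (0 : ℝ) 1)))
    (hvK : ∀ x ∈ Icc (0 : ℝ) 1, |v x| ≤ K) (hwK : ∀ x ∈ Icc (0 : ℝ) 1, |w x| ≤ K)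
    (hvw : ∀ x ∈ Icc (0 : ℝ) 1, |v x - w x| ≤ δ) (ht : t ∈ Icc (0 : ℝ) 1) :
    |selfNormalizer v t - selfNormalizer w t| ≤ 40 * K * δ := by
  have hforward := abs_chordDev_sub_le hv hw hvK hwK hvw ht
  have hbackward := abs_chordDev_sub_le hv.timeReversal hw.timeReversal
    (abs_timeReversal_le hvK) (abs_timeReversal_le hwK)
    (fun s hs => timeReversal_sub v w s ▸ abs_timeReversal_le hvw s hs)
    (t := 1 - t) ⟨by linarith [ht.2], by linarith [ht.1]⟩
  calc |selfNormalizer v t - selfNormalizer w t|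
      = |(chordDev v t - chordDev w t)
          + (chordDev (timeReversal v) (1 - t) - chordDev (timeReversal w) (1 - t))| := by
        rw [selfNormalizer, selfNormalizer]; ring_nf
    _ ≤ 8 * K * δ + 8 * (2 * K) * (2 * δ) := (abs_add_le _ _).trans (add_le_add hforward hbackward)
    _ = 40 * K * δ := by ring

end Bounds

lemma abs_div_sqrt_sub_div_sqrt_le {a b x y m : ℝ} (hm : 0 < m) (hx : m ≤ x) (hy : m ≤ y) :
    |a / √x - b / √y| ≤ (|a - b| + |b| * |x - y| / (2 * m)) / √m := by
  have hr : 0 < √m := Real.sqrt_pos.2 hm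
  have hp : √m ≤ √x := Real.sqrt_le_sqrt hx
  have hq : √m ≤ √y := Real.sqrt_le_sqrt hy
  have hpx : √x ^ 2 = x := Real.sq_sqrt (hm.le.trans hx)
  have hqy : √y ^ 2 = y := Real.sq_sqrt (hm.le.trans hy)
  set p := √x
  set q := √y
  have hp0 : 0 < p := hr.trans_le hp
  have hq0 : 0 < q := hr.trans_le hq
  have hpq : 0 < p * q * (p + q) := by positivity
  -- `b / p - b / q` is rationalised through `x - y = (p + q) (p - q)`
  have hsplit : a / p - b / q = (a - b) / p - b * (x - y) / (p * q * (p + q)) := by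
    rw [← hpx, ← hqy]
    field_simp
    ring
  calc |a / p - b / q|
      ≤ |(a - b) / p| + |b * (x - y) / (p * q * (p + q))| := hsplit ▸ abs_sub _ _
    _ = |a - b| / p + |b| * |x - y| / (p * q * (p + q)) := by
        rw [abs_div, abs_div, abs_mul, abs_of_pos hp0, abs_of_pos hpq]
    _ ≤ |a - b| / √m + |b| * |x - y| / (√m * √m * (√m + √m)) := by gcongr
    _ = (|a - b| + |b| * |x - y| / (2 * m)) / √m := by
        rw [Real.mul_self_sqrt hm.le]; field_simp; ring

lemma abs_snRatioInt_sub_le {v w : ℝ → ℝ} {K δ c t : ℝ}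
    (hv : AEStronglyMeasurable v (volume.restrict (Icc (0 : ℝ) 1)))
    (hw : AEStronglyMeasurable w (volume.restrict (Icc (0 : ℝ) 1)))
    (hvK : ∀ x ∈ Icc (0 : ℝ) 1, |v x| ≤ K) (hwK : ∀ x ∈ Icc (0 : ℝ) 1, |w x| ≤ K)
    (hvw : ∀ x ∈ Icc (0 : ℝ) 1, |v x - w x| ≤ δ) (hc : 0 < c)
    (hcw : c ≤ selfNormalizer w t) (hδc : 40 * K * δ ≤ c / 2) (ht : t ∈ Icc (0 : ℝ) 1) :
    |snRatioInt v t - snRatioInt w t| ≤ (2 * δ + 2 * K * (40 * K * δ) / c) / √(c / 2) := by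
  have hN := abs_selfNormalizer_sub_le hv hw hvK hwK hvw ht
  have hcv : c / 2 ≤ selfNormalizer v t := by linarith [(abs_sub_le_iff.1 hN).2]
  have hnum : |(v t - t * v 1) - (w t - t * w 1)| ≤ 2 * δ := by
    convert abs_sub_div_mul_le (f := fun x => v x - w x) hvw le_rfl ht using 2
    simp only [div_one]; ring
  have hden : |w t - t * w 1| ≤ 2 * K := by
    simpa only [div_one] using abs_sub_div_mul_le hwK le_rfl ht
  rw [snRatioInt_eq, snRatioInt_eq]
  refine (abs_div_sqrt_sub_div_sqrt_le (half_pos hc) hcv (by linarith)).trans ?_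
  rw [mul_div_cancel₀ c two_ne_zero]
  gcongr
  exact (abs_nonneg _).trans hden

lemma continuous_integral_sq_sub_mul {f : ℝ → ℝ} {r : ℝ} (hr : 0 ≤ r)
    (hf : ContinuousOn f (Icc 0 r)) :
    Continuous fun u : ℝ => ∫ s in (0 : ℝ)..r, (f s - s * u) ^ 2 := by
  set g : ℝ → ℝ := fun x => f (projIcc 0 r hr x)
  have hg : Continuous g :=
    hf.comp_continuous (continuous_subtype_val.comp continuous_projIcc) fun x => (projIcc 0 r hr x).2
  have hfg : ∀ u : ℝ, ∫ s in (0 : ℝ)..r, (f s - s * u) ^ 2 = ∫ s in (0 : ℝ)..r, (g s - s * u) ^ 2 :=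
    fun u => intervalIntegral.integral_congr fun s hs => by
      rw [uIcc_of_le hr] at hs
      simp [g, projIcc_of_mem hr hs]
  simp_rw [hfg]
  exact intervalIntegral.continuous_parametric_intervalIntegral_of_continuous' (by fun_prop) 0 r

lemma exists_pos_le_chordDev {f : ℝ → ℝ} {r : ℝ} (hf : ContinuousOn f (Icc 0 1)) (hr : 0 < r)
    (hr1 : r ≤ 1) (hlin : ¬∃ b : ℝ, ∀ s ∈ Icc 0 r, f s = b * s) :
    ∃ c > 0, ∀ t ∈ Icc r 1, c ≤ chordDev f t := by
  set φ : ℝ → ℝ := fun u => ∫ s in (0 : ℝ)..r, (f s - s * u) ^ 2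
  have hfr : ContinuousOn f (Icc 0 r) := hf.mono (Icc_subset_Icc le_rfl hr1)
  have hφ_pos : ∀ u, 0 < φ u := by
    intro u
    push Not at hlin
    obtain ⟨s, hs, hne⟩ := hlin u
    exact intervalIntegral.integral_pos hr
      ((hfr.sub (continuous_id.mul continuous_const).continuousOn).pow 2)
      (fun _ _ => sq_nonneg _) ⟨s, hs, sq_pos_of_ne_zero (sub_ne_zero.2 (mul_comm s u ▸ hne))⟩
  have hslope : ContinuousOn (fun t => f t / t) (Icc r 1) :=
    (hf.mono (Icc_subset_Icc hr.le le_rfl)).div continuousOn_id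
      fun t ht => (hr.trans_le ht.1).ne'
  obtain ⟨t₀, -, hmin⟩ := isCompact_Icc.exists_isMinOn (nonempty_Icc.2 hr1)
    ((continuous_integral_sq_sub_mul hr.le hfr).comp_continuousOn hslope)
  refine ⟨φ (f t₀ / t₀), hφ_pos _, fun t ht => (hmin ht).trans ?_⟩
  have hint : IntervalIntegrable (fun s => (f s - s / t * f t) ^ 2) volume 0 t :=
    ContinuousOn.intervalIntegrable_of_Icc (hr.le.trans ht.1)
      (((hf.mono (Icc_subset_Icc le_rfl ht.2)).sub
        ((continuous_id.div_const t).mul continuous_const).continuousOn).pow 2)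
  calc φ (f t / t) = ∫ s in (0 : ℝ)..r, (f s - s / t * f t) ^ 2 :=
        intervalIntegral.integral_congr fun s _ => by ring
    _ ≤ chordDev f t := intervalIntegral.integral_mono_interval le_rfl hr.le ht.1
        (ae_of_all _ fun _ => sq_nonneg _) hint

lemma exists_pos_le_selfNormalizer {w : ℝ → ℝ} (hw : ContinuousOn w (Icc 0 1))
    (h1 : ¬ ∃ a b : ℝ, ∀ s ∈ Icc (0 : ℝ) (1/2), w s = a + b * s)
    (h2 : ¬ ∃ a b : ℝ, ∀ s ∈ Icc (1/2 : ℝ) 1, w s = a + b * s) :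
    ∃ c > 0, ∀ t ∈ Icc (0 : ℝ) 1, c ≤ selfNormalizer w t := by
  obtain ⟨c₁, hc₁, hw₁⟩ := exists_pos_le_chordDev hw (r := 1/2) (by norm_num) (by norm_num)
    fun ⟨b, hb⟩ => h1 ⟨0, b, by simpa using hb⟩
  obtain ⟨c₂, hc₂, hw₂⟩ := exists_pos_le_chordDev hw.timeReversal (r := 1/2) (by norm_num)
    (by norm_num) fun ⟨b, hb⟩ => h2 ⟨w 1 - b, b, fun s hs => by
      have := hb (1 - s) ⟨by linarith [hs.2], by linarith [hs.1]⟩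
      simp only [timeReversal, sub_sub_cancel] at this
      linear_combination -this⟩
  refine ⟨min c₁ c₂, lt_min hc₁ hc₂, fun t ht => ?_⟩
  rw [selfNormalizer]
  rcases le_total t (1/2) with h | h
  · linarith [min_le_right c₁ c₂, chordDev_nonneg w ht.1,
      hw₂ (1 - t) ⟨by linarith, by linarith [ht.1]⟩]
  · linarith [min_le_left c₁ c₂, chordDev_nonneg (timeReversal w) (sub_nonneg.2 ht.2),
      hw₁ t ⟨h, ht.2⟩]

/-- The integral-type self-normalized ratio mapping is continuous (w.r.t. the supremum metric
on `[0,1]`, over bounded measurable functions) at every continuous `w` that is not affine on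
`[0,1/2]` nor on `[1/2,1]`. -/
theorem stmt_5 (w : ℝ → ℝ) (hw : ContinuousOn w (Set.Icc 0 1))
    (h1 : ¬ ∃ a b : ℝ, ∀ s ∈ Set.Icc (0 : ℝ) (1/2), w s = a + b * s)
    (h2 : ¬ ∃ a b : ℝ, ∀ s ∈ Set.Icc (1/2 : ℝ) 1, w s = a + b * s) :
    ∀ ε > 0, ∃ δ > 0, ∀ v : ℝ → ℝ, Measurable v →
      (∃ M : ℝ, ∀ t ∈ Set.Icc (0 : ℝ) 1, |v t| ≤ M) →
      sSup ((fun t => |v t - w t|) '' Set.Icc (0 : ℝ) 1) < δ →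
      sSup ((fun t => |snRatioInt v t - snRatioInt w t|) '' Set.Icc (0 : ℝ) 1) < ε := by
  intro ε hε
  obtain ⟨c, hc, hcw⟩ := exists_pos_le_selfNormalizer hw h1 h2
  obtain ⟨M, hM⟩ := isCompact_Icc.exists_bound_of_continuousOn hw
  simp only [Real.norm_eq_abs] at hM
  set K := M + 1
  set B : ℝ → ℝ := fun δ => (2 * δ + 2 * K * (40 * K * δ) / c) / √(c / 2)
  have hlim : ∀ g : ℝ → ℝ, Continuous g → g 0 = 0 → ∀ u > 0, ∀ᶠ δ in 𝓝[>] (0 : ℝ), g δ < u :=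
    fun g hg hg0 u hu => (hg0 ▸ hg.continuousWithinAt.tendsto).eventually_lt_const hu
  have hsmall : ∀ᶠ δ in 𝓝[>] (0 : ℝ), δ < 1 ∧ 40 * K * δ < c / 2 ∧ B δ < ε ∧ 0 < δ :=
    (hlim _ continuous_id rfl 1 one_pos).and <|
      (hlim (fun δ => 40 * K * δ) (by fun_prop) (by simp) (c / 2) (by positivity)).and <|
      (hlim B (by fun_prop) (by simp [B]) ε hε).and self_mem_nhdsWithin
  obtain ⟨δ, hδ1, hδc, hδε, hδ0⟩ := hsmall.exists
  refine ⟨δ, hδ0, fun v hv ⟨Mv, hMv⟩ hsup => ?_⟩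
  have hbdd : BddAbove ((fun t => |v t - w t|) '' Icc (0 : ℝ) 1) :=
    ⟨Mv + M, by rintro _ ⟨s, hs, rfl⟩; exact (abs_sub _ _).trans (add_le_add (hMv s hs) (hM s hs))⟩
  have hvw : ∀ s ∈ Icc (0 : ℝ) 1, |v s - w s| ≤ δ :=
    fun s hs => (le_csSup hbdd (mem_image_of_mem _ hs)).trans hsup.le
  have hvK : ∀ s ∈ Icc (0 : ℝ) 1, |v s| ≤ K := fun s hs => by
    linarith [abs_sub_abs_le_abs_sub (v s) (w s), hvw s hs, hM s hs]
  refine lt_of_le_of_lt (csSup_le ((nonempty_Icc.2 zero_le_one).image _) ?_) hδε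
  rintro _ ⟨t, ht, rfl⟩
  exact abs_snRatioInt_sub_le hv.aestronglyMeasurable (hw.aestronglyMeasurable measurableSet_Icc)
    hvK (fun x hx => by linarith [hM x hx]) hvw hc (hcw t ht) hδc.le ht
end

section
/- Let n ≥ 1, let x₁, …, xₙ be real numbers with |x_i| ≤ B for all i, and set S(m) := Σ_{i=1}^{m} x_i (with S(0) = 0). Let 0 < t ≤ 1 and s ∈ [0, t], and put j := ⌊s·n⌋ and k := ⌊t·n⌋, assuming k ≥ 1. Then | Σ_{i=1}^{j} ( x_i − (1/k)·Σ_{ℓ=1}^{k} x_ℓ ) − ( S(j) − (s/t)·S(k) ) | ≤ B; equivalently, |j/k − s/t| · |S(k)| ≤ B. -/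
/-! Writing `a = s/t` and `z = t n`, we have `s n = a z`, so `j = ⌊a z⌋₊` and `k = ⌊z⌋₊`; for
`0 ≤ a ≤ 1` both `j` and `a k` lie within `1` of `a z`, hence `|j - a k| ≤ 1`. The centered
partial sum equals `S j - (j/k) S k`, so both quantities are `|j/k - a| |S k| ≤ (1/k) (k B)`. -/

open Finset

theorem abs_natFloor_mul_sub_mul_natFloor_le_one {α : Type*} [Field α] [LinearOrder α]
    [IsStrictOrderedRing α] [FloorSemiring α] {a z : α} (ha0 : 0 ≤ a) (ha1 : a ≤ 1)
    (hz : 0 ≤ z) : |(⌊a * z⌋₊ : α) - a * ⌊z⌋₊| ≤ 1 := by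
  have hfloor_az := Nat.floor_le (mul_nonneg ha0 hz)
  have hlt_az := Nat.lt_floor_add_one (a * z)
  have hfloor_z := Nat.floor_le hz
  have hlt_z := Nat.lt_floor_add_one z
  have hlower : a * ⌊z⌋₊ ≤ a * z := mul_le_mul_of_nonneg_left hfloor_z ha0
  have hupper : a * z ≤ a * ⌊z⌋₊ + 1 := by nlinarith
  rw [abs_sub_le_iff]
  constructor <;> linarith

theorem abs_sum_le_card_nsmul {ι α : Type*} [AddCommGroup α] [LinearOrder α]
    [IsOrderedAddMonoid α] (s : Finset ι) (f : ι → α) {B : α} (hf : ∀ i ∈ s, |f i| ≤ B) :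
    |∑ i ∈ s, f i| ≤ #s • B :=
  (abs_sum_le_sum_abs f s).trans (sum_le_card_nsmul s _ B hf)

theorem stmt_7_general (n : ℕ) (x : ℕ → ℝ) (B : ℝ)
    (hx : ∀ i ∈ Finset.Icc 1 n, |x i| ≤ B)
    (t s : ℝ) (ht0 : 0 < t) (ht1 : t ≤ 1) (hs : s ∈ Set.Icc (0 : ℝ) t)
    (S : ℕ → ℝ) (hS : ∀ m, S m = ∑ i ∈ Finset.Icc 1 m, x i)
    (j k : ℕ) (hj : j = ⌊s * (n : ℝ)⌋₊) (hk : k = ⌊t * (n : ℝ)⌋₊) (hk1 : 1 ≤ k) :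
    |(∑ i ∈ Finset.Icc 1 j, (x i - (1 / (k : ℝ)) * ∑ l ∈ Finset.Icc 1 k, x l))
        - (S j - s / t * S k)| ≤ B
      ∧ |(j : ℝ) / (k : ℝ) - s / t| * |S k| ≤ B := by
  have hk_pos : (0 : ℝ) < k := by exact_mod_cast hk1
  have hkn : k ≤ n := hk ▸ Nat.floor_le_of_le (mul_le_of_le_one_left n.cast_nonneg ht1)
  have hSk : |S k| ≤ k * B := by
    simpa [hS k] using abs_sum_le_card_nsmul (Icc 1 k) x
      fun i hi ↦ hx i (Icc_subset_Icc_right hkn hi)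
  have hjk : |(j : ℝ) - s / t * k| ≤ 1 := by
    have hsn : s * n = s / t * (t * n) := by field_simp
    rw [hj, hk, hsn]
    exact abs_natFloor_mul_sub_mul_natFloor_le_one (div_nonneg hs.1 ht0.le)
      ((div_le_one ht0).2 hs.2) (by positivity)
  have hratio : |(j : ℝ) / k - s / t| * |S k| ≤ B := calc
    |(j : ℝ) / k - s / t| * |S k| = |(j : ℝ) - s / t * k| / k * |S k| := by
      rw [← abs_of_pos hk_pos, ← abs_div, abs_of_pos hk_pos]
      field_simp
    _ ≤ 1 / k * (k * B) := by gcongr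
    _ = B := by field_simp
  have hcentered : ∑ i ∈ Icc 1 j, (x i - 1 / (k : ℝ) * ∑ l ∈ Icc 1 k, x l)
      = S j - j / k * S k := by
    rw [sum_sub_distrib, sum_const, Nat.card_Icc, hS, hS, nsmul_eq_mul]
    push_cast
    ring
  refine ⟨?_, hratio⟩
  rw [hcentered, show S j - j / k * S k - (S j - s / t * S k) = -((j / k - s / t) * S k) by ring,
    abs_neg, abs_mul]
  exact hratio

/-- Deterministic approximation bound from the proof of Proposition 1: the discrete centered
partial sum at `j = ⌊s·n⌋`, normalized at `k = ⌊t·n⌋`, differs from its continuous-time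
analogue by at most the bound `B` on the summands; equivalently `|j/k − s/t|·|S(k)| ≤ B`. -/
theorem stmt_7 (n : ℕ) (hn : 1 ≤ n) (x : ℕ → ℝ) (B : ℝ)
    (hx : ∀ i ∈ Finset.Icc 1 n, |x i| ≤ B)
    (t s : ℝ) (ht0 : 0 < t) (ht1 : t ≤ 1) (hs : s ∈ Set.Icc (0 : ℝ) t)
    (S : ℕ → ℝ) (hS : ∀ m, S m = ∑ i ∈ Finset.Icc 1 m, x i)
    (j k : ℕ) (hj : j = ⌊s * (n : ℝ)⌋₊) (hk : k = ⌊t * (n : ℝ)⌋₊) (hk1 : 1 ≤ k) :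
    |(∑ i ∈ Finset.Icc 1 j, (x i - (1 / (k : ℝ)) * ∑ l ∈ Finset.Icc 1 k, x l))
        - (S j - s / t * S k)| ≤ B
      ∧ |(j : ℝ) / (k : ℝ) - s / t| * |S k| ≤ B :=
  stmt_7_general n x B hx t s ht0 ht1 hs S hS j k hj hk hk1
end

section
/- Let n ≥ 1, let x₁, …, xₙ be real numbers with |x_i| ≤ B for all i, and set S(m) := Σ_{i=1}^{m} x_i (with S(0) = 0). Let 0 < t ≤ 1 and s ∈ [0, t], and put j := ⌊s·n⌋ and k := ⌊t·n⌋, assuming k ≥ 1. Then | ( S(j) − (j/k)·S(k) )² − ( S(j) − (s/t)·S(k) )² | ≤ 4·k·B² ≤ 4·n·B². -/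
/-! With `u = j/k` and `v = s/t`, the difference of squares factors as
`(v - u) · S(k) · (2 S(j) - (u + v) S(k))`. Since both floors lose less than one,
`|u - v| ≤ 1/k`, while `|S(k)| ≤ k B`; so the first two factors contribute at most `B`
and the last one at most `4 k B`. -/

open Finset

lemma abs_sum_Icc_le_mul {x : ℕ → ℝ} {B : ℝ} {m : ℕ} (hx : ∀ i ∈ Icc 1 m, |x i| ≤ B) :
    |∑ i ∈ Icc 1 m, x i| ≤ m * B := by
  calc |∑ i ∈ Icc 1 m, x i| ≤ ∑ i ∈ Icc 1 m, |x i| := abs_sum_le_sum_abs _ _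
    _ ≤ (Icc 1 m).card • B := sum_le_card_nsmul _ _ _ hx
    _ = m * B := by simp

lemma abs_floor_mul_sub_floor_mul_le {s t y : ℝ} (hs : 0 ≤ s) (hst : s ≤ t) (hy : 0 ≤ y) :
    |(⌊s * y⌋₊ : ℝ) * t - ⌊t * y⌋₊ * s| ≤ t := by
  have hj := Nat.floor_le (mul_nonneg hs hy)
  have hj' := Nat.sub_one_lt_floor (s * y)
  have hk := Nat.floor_le (mul_nonneg (hs.trans hst) hy)
  have hk' := Nat.sub_one_lt_floor (t * y)
  rw [abs_le]
  constructor <;> nlinarith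

lemma abs_floor_div_floor_sub_div_le {s t y : ℝ} (hs : 0 ≤ s) (hst : s ≤ t) (ht : 0 < t)
    (hy : 0 ≤ y) (hk : 0 < ⌊t * y⌋₊) :
    |(⌊s * y⌋₊ : ℝ) / ⌊t * y⌋₊ - s / t| ≤ 1 / ⌊t * y⌋₊ := by
  have hk : (0 : ℝ) < ⌊t * y⌋₊ := by exact_mod_cast hk
  rw [div_sub_div _ _ hk.ne' ht.ne', abs_div, abs_of_pos (mul_pos hk ht),
    div_le_div_iff₀ (mul_pos hk ht) hk]
  nlinarith [abs_floor_mul_sub_floor_mul_le hs hst hy]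

lemma abs_sq_sub_mul_sub_sq_sub_mul_le {a c u v K : ℝ} (hu : u ∈ Set.Icc (0 : ℝ) 1)
    (hv : v ∈ Set.Icc (0 : ℝ) 1) (ha : |a| ≤ K) (hc : |c| ≤ K) :
    |(a - u * c) ^ 2 - (a - v * c) ^ 2| ≤ |u - v| * |c| * (4 * K) := by
  obtain ⟨hu0, hu1⟩ := hu
  obtain ⟨hv0, hv1⟩ := hv
  have hsum : |2 * a - (u + v) * c| ≤ 4 * K := by
    calc |2 * a - (u + v) * c| ≤ 2 * |a| + (u + v) * |c| := by
          have := abs_sub (2 * a) ((u + v) * c)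
          rwa [abs_mul, abs_mul, abs_two, abs_of_nonneg (add_nonneg hu0 hv0)] at this
      _ ≤ 2 * K + 2 * K := by nlinarith [abs_nonneg c]
      _ = 4 * K := by ring
  calc |(a - u * c) ^ 2 - (a - v * c) ^ 2| = |u - v| * |c| * |2 * a - (u + v) * c| := by
        rw [abs_sub_comm u v, ← abs_mul, ← abs_mul]; ring_nf
    _ ≤ |u - v| * |c| * (4 * K) := by gcongr

/-- Deterministic approximation bound from the proof of Proposition 2: the squared discrete
centered partial sums differ from their continuous-time analogues by at most `4·k·B² ≤ 4·n·B²`. -/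
theorem stmt_8 (n : ℕ) (hn : 1 ≤ n) (x : ℕ → ℝ) (B : ℝ)
    (hx : ∀ i ∈ Finset.Icc 1 n, |x i| ≤ B)
    (t s : ℝ) (ht0 : 0 < t) (ht1 : t ≤ 1) (hs : s ∈ Set.Icc (0 : ℝ) t)
    (S : ℕ → ℝ) (hS : ∀ m, S m = ∑ i ∈ Finset.Icc 1 m, x i)
    (j k : ℕ) (hj : j = ⌊s * (n : ℝ)⌋₊) (hk : k = ⌊t * (n : ℝ)⌋₊) (hk1 : 1 ≤ k) :
    |(S j - (j : ℝ) / (k : ℝ) * S k) ^ 2 - (S j - s / t * S k) ^ 2| ≤ 4 * (k : ℝ) * B ^ 2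
      ∧ 4 * (k : ℝ) * B ^ 2 ≤ 4 * (n : ℝ) * B ^ 2 := by
  obtain ⟨hs0, hst⟩ := hs
  have hB : 0 ≤ B := (abs_nonneg _).trans (hx 1 (left_mem_Icc.mpr hn))
  have hkpos : (0 : ℝ) < k := by exact_mod_cast hk1
  have hkn : k ≤ n := by
    rw [hk]; exact Nat.floor_le_of_le (mul_le_of_le_one_left n.cast_nonneg ht1)
  have hjk : j ≤ k := by
    rw [hj, hk]; exact Nat.floor_le_floor (mul_le_mul_of_nonneg_right hst n.cast_nonneg)
  have hS_le : ∀ m ≤ k, |S m| ≤ k * B := fun m hm => by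
    rw [hS]
    exact (abs_sum_Icc_le_mul fun i hi => hx i (Icc_subset_Icc_right (hm.trans hkn) hi)).trans
      (by gcongr)
  have hfrac : |(j : ℝ) / k - s / t| * |S k| ≤ B := by
    have h := abs_floor_div_floor_sub_div_le hs0 hst ht0 n.cast_nonneg (hk ▸ hk1)
    rw [← hj, ← hk] at h
    calc |(j : ℝ) / k - s / t| * |S k| ≤ 1 / k * (k * B) := by gcongr; exact hS_le k le_rfl
      _ = B := by field_simp
  refine ⟨?_, by gcongr⟩
  calc _ ≤ |(j : ℝ) / k - s / t| * |S k| * (4 * (k * B)) :=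
        abs_sq_sub_mul_sub_sq_sub_mul_le
          ⟨by positivity, div_le_one_of_le₀ (by exact_mod_cast hjk) hkpos.le⟩
          ⟨div_nonneg hs0 ht0.le, div_le_one_of_le₀ hst ht0.le⟩ (hS_le j hjk) (hS_le k le_rfl)
    _ ≤ B * (4 * (k * B)) := by gcongr
    _ = 4 * k * B ^ 2 := by ring
end

section
/- Let ζ ∈ (0,1), μ ∈ ℝ, and δ ∈ ℝ with δ ≠ 0. For each n ≥ 1 set τ_n := ⌊n·ζ⌋ and m_{n,i} := μ + δ·1{i > τ_n} for i = 1, …, n. Then, uniformly in t ∈ [0,1], (1/(n·|δ|)) · ( | Σ_{i=1}^{⌊n·t⌋} m_{n,i} − (⌊n·t⌋/n)·Σ_{i=1}^{n} m_{n,i} | + | Σ_{i=n−⌊n·t⌋+1}^{n} m_{n,i} − (⌊n·t⌋/n)·Σ_{i=1}^{n} m_{n,i} | ) converges as n → ∞ to min{t, 1−t, ζ, 1−ζ}; that is, the supremum over t ∈ [0,1] of the absolute difference between the displayed quantity and min{t, 1−t, ζ, 1−ζ} tends to 0. -/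
/-!
With `k = ⌊n t⌋` and `T = τ_n`, the statistic is computed exactly: the forward CUSUM is
`-δ (min k T - k T / n)` and the reflected one is `δ (min k (n - T) - k (n - T) / n)`, both brackets
being nonnegative, so after normalisation the statistic equals
`(min k T + min k (n - T) - k) / n = min (k/n, 1 - k/n, T/n, 1 - T/n)`.
Since `x ↦ min x (1 - x)` is 1-Lipschitz and `⌊n x⌋₊ / n` is within `1/n` of `x`, the supremum
over `t` is at most `1/n`.
-/

open Filter Finset

lemma min_add_min_sub_sub_eq_min_min (K T N : ℝ) :
    min K T + min K (N - T) - K = min (min K (N - K)) (min T (N - T)) := by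
  simp only [min_def]
  split_ifs <;> linarith

lemma mul_le_mul_min {K T N : ℝ} (hK₀ : 0 ≤ K) (hKN : K ≤ N) (hT₀ : 0 ≤ T) (hTN : T ≤ N) :
    K * T ≤ N * min K T := by
  rw [mul_min_of_nonneg _ _ (hK₀.trans hKN)]
  exact le_min (by nlinarith) (by nlinarith)

lemma abs_min_one_sub_sub_le (x y : ℝ) : |min x (1 - x) - min y (1 - y)| ≤ |x - y| := by
  refine (abs_min_sub_min_le_max _ _ _ _).trans ?_
  rw [sub_sub_sub_cancel_left, abs_sub_comm, max_self]

lemma abs_natFloor_mul_div_sub_le {n : ℕ} (hn : 0 < n) {x : ℝ} (hx : 0 ≤ x) :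
    |(⌊(n : ℝ) * x⌋₊ : ℝ) / n - x| ≤ 1 / n := by
  have hn' : (0 : ℝ) < n := by exact_mod_cast hn
  have hfloor : |(⌊(n : ℝ) * x⌋₊ : ℝ) - n * x| ≤ 1 := by
    rw [abs_le]
    constructor <;> linarith [Nat.floor_le (by positivity : 0 ≤ (n : ℝ) * x),
      Nat.lt_floor_add_one ((n : ℝ) * x)]
  have hdiv : (⌊(n : ℝ) * x⌋₊ : ℝ) / n - x = ((⌊(n : ℝ) * x⌋₊ : ℝ) - n * x) / n := by
    field_simp
  rw [hdiv, abs_div, abs_of_pos hn']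
  gcongr

noncomputable def cusum (x : ℕ → ℝ) (n k : ℕ) : ℝ :=
  ∑ i ∈ Icc 1 k, x i - (k / n : ℝ) * ∑ i ∈ Icc 1 n, x i

noncomputable def reflectedCusum (x : ℕ → ℝ) (n k : ℕ) : ℝ :=
  ∑ i ∈ Icc (n - k + 1) n, x i - (k / n : ℝ) * ∑ i ∈ Icc 1 n, x i

section Changepoint

variable (μ δ : ℝ) (T : ℕ) {n k : ℕ}

lemma sum_add_ite_lt (s : Finset ℕ) :
    ∑ i ∈ s, (μ + if T < i then δ else 0) = #s * μ + #{i ∈ s | T < i} * δ := by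
  rw [sum_add_distrib, sum_const, ← sum_filter, sum_const, nsmul_eq_mul, nsmul_eq_mul]

lemma card_filter_lt_Icc_one (k : ℕ) : #{i ∈ Icc 1 k | T < i} = k - min k T := by
  rw [show {i ∈ Icc 1 k | T < i} = Icc (T + 1) k by ext; simp; omega, Nat.card_Icc]
  omega

lemma card_filter_lt_Icc_tail (hk : k ≤ n) :
    #{i ∈ Icc (n - k + 1) n | T < i} = min k (n - T) := by
  rw [show {i ∈ Icc (n - k + 1) n | T < i} = Icc (max (n - k) T + 1) n by ext; simp; omega,
    Nat.card_Icc]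
  omega

lemma cusum_add_ite_lt (hn : 0 < n) (hT : T ≤ n) :
    cusum (fun i => μ + if T < i then δ else 0) n k = -(δ * (min (k : ℝ) T - k * T / n)) := by
  have hn' : (n : ℝ) ≠ 0 := by positivity
  simp only [cusum, sum_add_ite_lt, card_filter_lt_Icc_one, Nat.card_Icc, Nat.add_sub_cancel,
    min_eq_right hT, Nat.cast_sub (min_le_left k T), Nat.cast_sub hT, Nat.cast_min]
  field_simp
  ring

lemma reflectedCusum_add_ite_lt (hn : 0 < n) (hk : k ≤ n) (hT : T ≤ n) :
    reflectedCusum (fun i => μ + if T < i then δ else 0) n k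
      = δ * (min (k : ℝ) (n - T) - k * (n - T) / n) := by
  have hn' : (n : ℝ) ≠ 0 := by positivity
  simp only [reflectedCusum, sum_add_ite_lt, card_filter_lt_Icc_one, card_filter_lt_Icc_tail T hk,
    Nat.card_Icc, Nat.add_sub_cancel, min_eq_right hT, Nat.cast_sub hT, Nat.cast_min]
  rw [show n + 1 - (n - k + 1) = k by omega]
  field_simp
  ring

lemma abs_cusum_add_abs_reflectedCusum_add_ite_lt (hδ : δ ≠ 0) (hn : 0 < n) (hk : k ≤ n)
    (hT : T ≤ n) :
    1 / ((n : ℝ) * |δ|) * (|cusum (fun i => μ + if T < i then δ else 0) n k|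
        + |reflectedCusum (fun i => μ + if T < i then δ else 0) n k|)
      = min (min (k / n : ℝ) (1 - k / n)) (min (T / n : ℝ) (1 - T / n)) := by
  have hn' : (0 : ℝ) < n := by exact_mod_cast hn
  have hk' : (k : ℝ) ≤ n := by exact_mod_cast hk
  have hT' : (T : ℝ) ≤ n := by exact_mod_cast hT
  have hfwd : 0 ≤ min (k : ℝ) T - k * T / n := by
    rw [sub_nonneg, div_le_iff₀' hn']
    exact mul_le_mul_min k.cast_nonneg hk' T.cast_nonneg hT'
  have hbwd : 0 ≤ min (k : ℝ) (n - T) - k * (n - T) / n := by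
    rw [sub_nonneg, div_le_iff₀' hn']
    exact mul_le_mul_min k.cast_nonneg hk' (sub_nonneg.2 hT') (sub_le_self _ T.cast_nonneg)
  rw [cusum_add_ite_lt μ δ T hn hT, reflectedCusum_add_ite_lt μ δ T hn hk hT,
    abs_neg, abs_mul, abs_mul, abs_of_nonneg hfwd, abs_of_nonneg hbwd]
  have hnorm : 1 / ((n : ℝ) * |δ|) *
        (|δ| * (min (k : ℝ) T - k * T / n) + |δ| * (min (k : ℝ) (n - T) - k * (n - T) / n))
      = (min (k : ℝ) T + min (k : ℝ) (n - T) - k) / n := by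
    field_simp
    ring
  rw [hnorm, min_add_min_sub_sub_eq_min_min, one_sub_div hn'.ne', one_sub_div hn'.ne',
    min_div_div_right hn'.le, min_div_div_right hn'.le, min_div_div_right hn'.le]

end Changepoint

/-- Uniform deterministic limit in the proof of Theorem 4: under the at-most-one-change mean
model with changepoint `τ_n = ⌊n·ζ⌋`, the normalized sum of the forward CUSUM and the
reflected CUSUM of the means converges uniformly in `t ∈ [0,1]` to `min{t, 1−t, ζ, 1−ζ}`. -/
theorem stmt_11 (ζ : ℝ) (hζ : ζ ∈ Set.Ioo (0 : ℝ) 1) (μ δ : ℝ) (hδ : δ ≠ 0)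
    (τ : ℕ → ℕ) (hτ : ∀ n, τ n = ⌊(n : ℝ) * ζ⌋₊)
    (m : ℕ → ℕ → ℝ) (hm : ∀ n i, m n i = μ + (if τ n < i then δ else 0)) :
    Tendsto (fun n : ℕ =>
        sSup ((fun t : ℝ =>
          |(1 / ((n : ℝ) * |δ|)) *
              (|(∑ i ∈ Finset.Icc 1 ⌊(n : ℝ) * t⌋₊, m n i)
                  - ((⌊(n : ℝ) * t⌋₊ : ℝ) / (n : ℝ)) * ∑ i ∈ Finset.Icc 1 n, m n i|
                + |(∑ i ∈ Finset.Icc (n - ⌊(n : ℝ) * t⌋₊ + 1) n, m n i)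
                  - ((⌊(n : ℝ) * t⌋₊ : ℝ) / (n : ℝ)) * ∑ i ∈ Finset.Icc 1 n, m n i|)
            - min (min t (1 - t)) (min ζ (1 - ζ))|) '' Set.Icc (0 : ℝ) 1))
      atTop (nhds 0) := by
  refine squeeze_zero' (Eventually.of_forall fun n => Real.sSup_nonneg ?_) ?_
    tendsto_one_div_atTop_nhds_zero_nat
  · rintro _ ⟨t, -, rfl⟩
    exact abs_nonneg _
  filter_upwards [eventually_gt_atTop 0] with n hn
  refine Real.sSup_le ?_ (by positivity)
  rintro _ ⟨t, ⟨ht₀, ht₁⟩, rfl⟩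
  have hfloor_le {x : ℝ} (hx : x ≤ 1) : ⌊(n : ℝ) * x⌋₊ ≤ n :=
    Nat.floor_le_of_le (mul_le_of_le_one_right n.cast_nonneg hx)
  have hstat := abs_cusum_add_abs_reflectedCusum_add_ite_lt μ δ _ hδ hn (hfloor_le ht₁)
    (hfloor_le hζ.2.le)
  simp only [cusum, reflectedCusum] at hstat
  simp only [hm, hτ, hstat]
  refine (abs_min_sub_min_le_max _ _ _ _).trans (max_le ?_ ?_)
  · exact (abs_min_one_sub_sub_le _ _).trans (abs_natFloor_mul_div_sub_le hn ht₀)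
  · exact (abs_min_one_sub_sub_le _ _).trans (abs_natFloor_mul_div_sub_le hn hζ.1.le)
end
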